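/- arXiv:math/0101219 — 3 statements merged into one kernel-verified Lean document; each statement's English description precedes it below -/
import Mathlib

section
/- Let C be a braided monoidal category with braiding β, A a commutative monoid object in C, and (X, μ_X) a module over A. Then the action μ_X : A ⊗ X ⟶ X coequalizes the two morphisms μ₁ = μ ⊗ id_X and μ₂ = (id_A ⊗ μ_X) ∘ (β_{A,A} ⊗ id_X) : A ⊗ A ⊗ X ⟶ A ⊗ X defining A ⊗_A X (with A regarded as a module over itself via μ), and the induced morphism A ⊗_A X ⟶ X from the coequalizer is an isomorphism of A-modules, with inverse π_{A,X} ∘ (ι ⊗ id_X) : X ≅ 𝟙 ⊗ X ⟶ A ⊗ X ⟶ A ⊗_A X. In particular A is a unit object for the tensor product ⊗_A on Mod A. -/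
open CategoryTheory MonoidalCategory Limits

universe v u

variable {C : Type u} [Category.{v} C] [MonoidalCategory C] [BraidedCategory C]

/-- The free module `F(V) = A ⊗ V` over a monoid object `A`, with action `μ ⊗ id_V`. -/
@[simps]
def freeMod (A : Mon C) (V : C) : Mod C A.X where
  X := A.X ⊗ V
  mod :=
  { smul := (α_ A.X A.X V).inv ≫ (MonObj.mul (X := A.X) ▷ V)
    one_smul := by
      dsimp only [selfLeftAction_actionHomLeft,
        selfLeftAction_actionObj]
      rw [associator_inv_naturality_left_assoc, ← comp_whiskerRight, MonObj.one_mul]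
      simp
    mul_smul := by
      dsimp only [selfLeftAction_actionHomLeft,
        selfLeftAction_actionHomRight,
        selfLeftAction_actionAssocIso,
        selfLeftAction_actionObj]
      simp only [MonoidalCategory.whiskerLeft_comp]
      slice_rhs 3 4 => rw [associator_inv_naturality_middle]
      rw [associator_inv_naturality_left_assoc, ← comp_whiskerRight, MonObj.mul_assoc]
      simp only [comp_whiskerRight, Category.assoc]
      monoidal }

/-- The first of the two morphisms whose coequalizer is `X ⊗_A Y`, namely `μ_X ⊗ id_Y`. -/
def mapOne {A : Mon C} (X Y : Mod C A.X) : (A.X ⊗ X.X) ⊗ Y.X ⟶ X.X ⊗ Y.X :=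
  ModObj.smul (M := A.X) (X := X.X) ▷ Y.X

/-- The second of the two morphisms whose coequalizer is `X ⊗_A Y`, namely
`(id_X ⊗ μ_Y) ∘ (β_{A,X} ⊗ id_Y)`. -/
def mapTwo {A : Mon C} (X Y : Mod C A.X) : (A.X ⊗ X.X) ⊗ Y.X ⟶ X.X ⊗ Y.X :=
  ((β_ A.X X.X).hom ▷ Y.X) ≫ (α_ X.X A.X Y.X).hom ≫ (X.X ◁ ModObj.smul (M := A.X) (X := Y.X))

variable [HasCoequalizers C]

/-- The underlying object of `X ⊗_A Y`: the coequalizer of `mapOne` and `mapTwo`. -/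
noncomputable def tensorQ {A : Mon C} (X Y : Mod C A.X) : C :=
  coequalizer (mapOne X Y) (mapTwo X Y)

/-- The canonical projection `π_{X,Y} : X ⊗ Y ⟶ X ⊗_A Y`. -/
noncomputable def tensorπ {A : Mon C} (X Y : Mod C A.X) : X.X ⊗ Y.X ⟶ tensorQ X Y :=
  coequalizer.π _ _

/-!
Commutativity of `A` is used twice. It makes `μ_X` coequalize the two maps, and it turns the
coequalizer relation into `(A ◁ μ_X) ≫ π = α⁻¹ ≫ (μ ▷ X) ≫ π`. With the unit law of `A` the latter
gives `μ_X ≫ (λ⁻¹ ≫ ι ▷ X ≫ π) = π`, so `λ⁻¹ ≫ ι ▷ X ≫ π` is a two-sided inverse of the map induced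
by `μ_X`. The `A`-action on `A ⊗_A X` is then the one transported from `X` along this isomorphism.
-/

open scoped MonObj

namespace RegularTensor

variable {A : Mon C} {X : Mod C A.X}

omit [HasCoequalizers C] in
lemma mapTwo_regular_comp_smul :
    mapTwo (Mod.regular A.X) X ≫ γ[A.X, X.X] = ((β_ A.X A.X).hom ≫ μ) ▷ X.X ≫ γ[A.X, X.X] := by
  change ((β_ A.X A.X).hom ▷ X.X ≫ (α_ A.X A.X X.X).hom ≫ A.X ◁ γ[A.X, X.X]) ≫ γ[A.X, X.X] = _
  simp only [Category.assoc, ModObj.mul_smul_self_flip, Iso.hom_inv_id_assoc, comp_whiskerRight]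

/-- `tensorπ (Mod.regular A.X) X` with its source restated as `A.X ⊗ X.X`: the original source
`(Mod.regular A.X).X ⊗ X.X` agrees with it only after unfolding, which breaks `rw` and `simp`. -/
noncomputable def regularTensorπ (X : Mod C A.X) : A.X ⊗ X.X ⟶ tensorQ (Mod.regular A.X) X :=
  tensorπ (Mod.regular A.X) X

instance : Epi (regularTensorπ X) := coequalizer.π_epi

lemma mul_whiskerRight_regularTensorπ :
    μ[A.X] ▷ X.X ≫ regularTensorπ X =
      (β_ A.X A.X).hom ▷ X.X ≫ (α_ A.X A.X X.X).hom ≫ A.X ◁ γ[A.X, X.X] ≫ regularTensorπ X := by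
  rw [← Category.assoc (α_ A.X A.X X.X).hom, ← Category.assoc]
  exact coequalizer.condition (mapOne (Mod.regular A.X) X) (mapTwo (Mod.regular A.X) X)

noncomputable def oneTensor (X : Mod C A.X) : X.X ⟶ tensorQ (Mod.regular A.X) X :=
  (λ_ X.X).inv ≫ η[A.X] ▷ X.X ≫ regularTensorπ X

variable (hcomm : (β_ A.X A.X).hom ≫ μ[A.X] = μ[A.X])
include hcomm

omit [HasCoequalizers C] in
lemma mapOne_comp_smul_eq_mapTwo_comp_smul :
    mapOne (Mod.regular A.X) X ≫ γ[A.X, X.X] = mapTwo (Mod.regular A.X) X ≫ γ[A.X, X.X] := by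
  rw [mapTwo_regular_comp_smul, hcomm]
  rfl

lemma whiskerLeft_smul_regularTensorπ :
    A.X ◁ γ[A.X, X.X] ≫ regularTensorπ X = (α_ A.X A.X X.X).inv ≫ μ ▷ X.X ≫ regularTensorπ X := by
  have := mul_whiskerRight_regularTensorπ (X := X)
  rw [← hcomm, comp_whiskerRight, Category.assoc, cancel_epi] at this
  rw [this, Iso.inv_hom_id_assoc]

variable (X) in
noncomputable def smulDesc : tensorQ (Mod.regular A.X) X ⟶ X.X :=
  coequalizer.desc γ[A.X, X.X] (mapOne_comp_smul_eq_mapTwo_comp_smul hcomm)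

lemma regularTensorπ_smulDesc : regularTensorπ X ≫ smulDesc X hcomm = γ[A.X, X.X] :=
  coequalizer.π_desc _ _

lemma oneTensor_smulDesc : oneTensor X ≫ smulDesc X hcomm = 𝟙 X.X := by
  simp only [oneTensor, Category.assoc, regularTensorπ_smulDesc, ModObj.one_smul_self,
    Iso.inv_hom_id]

lemma smul_oneTensor : γ[A.X, X.X] ≫ oneTensor X = regularTensorπ X := by
  rw [oneTensor, leftUnitor_inv_naturality_assoc, whisker_exchange_assoc,
    whiskerLeft_smul_regularTensorπ hcomm]
  have one_mul_whiskerRight :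
      (λ_ (A.X ⊗ X.X)).inv ≫ η ▷ (A.X ⊗ X.X) ≫ (α_ A.X A.X X.X).inv ≫ μ ▷ X.X = 𝟙 _ :=
    calc _ = ((λ_ A.X).inv ≫ η ▷ A.X ≫ μ) ▷ X.X := by monoidal
      _ = 𝟙 _ := by rw [MonObj.one_mul, Iso.inv_hom_id, id_whiskerRight]
  exact (reassoc_of% one_mul_whiskerRight) (regularTensorπ X)

lemma smulDesc_oneTensor : smulDesc X hcomm ≫ oneTensor X = 𝟙 _ := by
  rw [← cancel_epi (regularTensorπ X), ← Category.assoc, regularTensorπ_smulDesc,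
    smul_oneTensor hcomm, Category.comp_id]

variable (X) in
noncomputable def regularTensorIso : tensorQ (Mod.regular A.X) X ≅ X.X where
  hom := smulDesc X hcomm
  inv := oneTensor X
  hom_inv_id := smulDesc_oneTensor hcomm
  inv_hom_id := oneTensor_smulDesc hcomm

end RegularTensor

open RegularTensor

theorem regular_tensor_unit
    (A : Mon C) (hcomm : (β_ A.X A.X).hom ≫ MonObj.mul (X := A.X) = MonObj.mul (X := A.X))
    (X : Mod C A.X) :
    ∃ h : mapOne (Mod.regular A.X) X ≫ ModObj.smul (M := A.X) (X := X.X) = mapTwo (Mod.regular A.X) X ≫ ModObj.smul (M := A.X) (X := X.X),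
      ∃ actQ : A.X ⊗ tensorQ (Mod.regular A.X) X ⟶ tensorQ (Mod.regular A.X) X,
        -- `actQ` is the action of `A` descended from the action on the first factor
        ((A.X ◁ tensorπ (Mod.regular A.X) X) ≫ actQ
            = (α_ A.X A.X X.X).inv ≫ (MonObj.mul (X := A.X) ▷ X.X) ≫ tensorπ (Mod.regular A.X) X) ∧
        -- `actQ` satisfies the module axioms
        ((MonObj.one (X := A.X) ▷ tensorQ (Mod.regular A.X) X) ≫ actQ = (λ_ (tensorQ (Mod.regular A.X) X)).hom) ∧
        ((MonObj.mul (X := A.X) ▷ tensorQ (Mod.regular A.X) X) ≫ actQ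
            = (α_ A.X A.X (tensorQ (Mod.regular A.X) X)).hom ≫ (A.X ◁ actQ) ≫ actQ) ∧
        -- the morphism `A ⊗_A X ⟶ X` induced by `μ_X` on the coequalizer is a morphism of
        -- `A`-modules ...
        (actQ ≫ coequalizer.desc (ModObj.smul (M := A.X) (X := X.X)) h = (A.X ◁ coequalizer.desc (ModObj.smul (M := A.X) (X := X.X)) h) ≫ ModObj.smul (M := A.X) (X := X.X)) ∧
        -- ... and an isomorphism, with inverse `π_{A,X} ∘ (ι ⊗ id_X)`
        (coequalizer.desc (ModObj.smul (M := A.X) (X := X.X)) h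
            ≫ ((λ_ X.X).inv ≫ (MonObj.one (X := A.X) ▷ X.X) ≫ tensorπ (Mod.regular A.X) X)
          = 𝟙 (tensorQ (Mod.regular A.X) X)) ∧
        (((λ_ X.X).inv ≫ (MonObj.one (X := A.X) ▷ X.X) ≫ tensorπ (Mod.regular A.X) X)
            ≫ coequalizer.desc (ModObj.smul (M := A.X) (X := X.X)) h = 𝟙 X.X) := by
  have : IsMonHom (Iso.refl A.X).hom := inferInstanceAs (IsMonHom (𝟙 A.X))
  let : ModObj A.X (tensorQ (Mod.regular A.X) X) :=
    ModObj.ofIso (Iso.refl A.X) (regularTensorIso X hcomm).symm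
  have smul_eq : γ[A.X, tensorQ (Mod.regular A.X) X] =
      A.X ◁ smulDesc X hcomm ≫ γ[A.X, X.X] ≫ oneTensor X := by
    simp only [ModObj.ofIso_smul, selfLeftAction_actionHom, Iso.refl_inv, id_tensorHom]
    rfl
  refine ⟨mapOne_comp_smul_eq_mapTwo_comp_smul hcomm, γ[A.X, tensorQ (Mod.regular A.X) X], ?_,
    ModObj.one_smul_self _ _, ModObj.mul_smul_self _ _, ?_,
    smulDesc_oneTensor hcomm, oneTensor_smulDesc hcomm⟩
  · change A.X ◁ regularTensorπ X ≫ _ = (α_ A.X A.X X.X).inv ≫ μ ▷ X.X ≫ regularTensorπ X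
    rw [smul_eq, ← MonoidalCategory.whiskerLeft_comp_assoc, regularTensorπ_smulDesc hcomm,
      smul_oneTensor hcomm, whiskerLeft_smul_regularTensorπ hcomm]
  · change γ[A.X, _] ≫ smulDesc X hcomm = A.X ◁ smulDesc X hcomm ≫ γ[A.X, X.X]
    rw [smul_eq, Category.assoc, Category.assoc, oneTensor_smulDesc hcomm, Category.comp_id]
end

section
/- Let C be a ℂ-linear abelian braided monoidal category in which tensoring on either side with any object is exact, and in which every object is projective (e.g. C semisimple). Let A be a commutative rigid monoid object in C (Hom(𝟙, A) one-dimensional, nondegenerate pairing e_A = ε ∘ μ, dim A ≠ 0). Then every object of the abelian category Mod A is projective; consequently every short exact sequence in Mod A splits, i.e. Ext¹ vanishes in Mod A and A is a semisimple algebra. -/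
open CategoryTheory MonoidalCategory Limits

universe v u

/-
Maschke-style averaging.  Write `i = Σ xₖ ⊗ yₖ` for the copairing of `e_A = ε ∘ μ`.  Since
`e_A (a b, c) = e_A (a, b c)` and `e_A` is nondegenerate, `i` commutes with `A`:
`Σ a xₖ ⊗ yₖ = Σ xₖ ⊗ yₖ a`.  Hence for an epimorphism `g : Y ⟶ Z` of `A`-modules and any
section `s₀` of `g` in `C` (which exists since `Z` is projective in `C`, and `g` is an
epimorphism in `C` because cokernels of modules are computed in `C`), the average
`t z = Σ xₖ s₀ (yₖ z)` is `A`-linear, and `t ≫ g` is the action of `μ (i) = dim A • 1`,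
an isomorphism as `dim A ≠ 0`.
-/

open scoped MonObj

namespace CategoryTheory

theorem eq_smul_of_finrank_hom_eq_one {C : Type*} [Category C] {K : Type*} [Field K]
    [Preadditive C] [Linear K C] {X Y : C} (h1 : Module.finrank K (X ⟶ Y) = 1)
    {s : X ⟶ Y} {r : Y ⟶ X} (hsr : s ≫ r = 𝟙 X) {x : X ⟶ Y} {c : K} (hx : x ≫ r = c • 𝟙 X) :
    x = c • s := by
  have hid : 𝟙 X ≠ 0 := fun h => by
    have : Subsingleton (X ⟶ Y) := ⟨fun f g => by
      rw [← Category.id_comp f, ← Category.id_comp g, h, zero_comp, zero_comp]⟩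
    simp [Module.finrank_zero_of_subsingleton] at h1
  have hs : s ≠ 0 := fun h => hid (by rw [← hsr, h, zero_comp])
  obtain ⟨c', rfl⟩ := (finrank_eq_one_iff_of_nonzero' s hs).1 h1 x
  rw [Linear.smul_comp, hsr] at hx
  rw [smul_left_injective K hid hx]

variable {C : Type u} [Category.{v} C] [MonoidalCategory C]

section Casimir

variable {A : C}

theorem copairing_comp_transpose_whiskerRight {e : A ⊗ A ⟶ 𝟙_ C} {i : 𝟙_ C ⟶ A ⊗ A}
    (zag : (ρ_ A).inv ≫ A ◁ i ≫ (α_ A A A).inv ≫ e ▷ A ≫ (λ_ A).hom = 𝟙 A)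
    (m : A ⟶ A ⊗ A) :
    (ρ_ A).inv ≫ A ◁ i ≫ (α_ A A A).inv ≫
      (m ▷ A ≫ (α_ A A A).hom ≫ A ◁ e ≫ (ρ_ A).hom) ▷ A = m := by
  calc _ = m ≫ A ◁ ((ρ_ A).inv ≫ A ◁ i ≫ (α_ A A A).inv ≫ e ▷ A ≫ (λ_ A).hom) := by
        simp only [comp_whiskerRight]
        rw [← associator_inv_naturality_left_assoc, whisker_exchange_assoc,
          ← rightUnitor_inv_naturality_assoc]
        congr 1
        monoidal
    _ = m := by rw [zag]; simp

variable [MonObj A]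

def IsCentralTensor (i : 𝟙_ C ⟶ A ⊗ A) : Prop :=
  (ρ_ A).inv ≫ A ◁ i ≫ (α_ A A A).inv ≫ μ ▷ A = (λ_ A).inv ≫ i ▷ A ≫ (α_ A A A).hom ≫ A ◁ μ

theorem transpose_copairing_whiskerLeft_mul {ε : A ⟶ 𝟙_ C} {i : 𝟙_ C ⟶ A ⊗ A}
    (zig : (λ_ A).inv ≫ i ▷ A ≫ (α_ A A A).hom ≫ A ◁ (μ ≫ ε) ≫ (ρ_ A).hom = 𝟙 A) :
    ((λ_ A).inv ≫ i ▷ A ≫ (α_ A A A).hom ≫ A ◁ μ) ▷ A ≫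
      (α_ A A A).hom ≫ A ◁ (μ ≫ ε) ≫ (ρ_ A).hom = μ := by
  calc _ = μ ≫ (λ_ A).inv ≫ i ▷ A ≫ (α_ A A A).hom ≫ A ◁ (μ ≫ ε) ≫ (ρ_ A).hom := by
        simp only [comp_whiskerRight, Category.assoc]
        rw [associator_naturality_middle_assoc, ← MonoidalCategory.whiskerLeft_comp_assoc,
          MonObj.mul_assoc_assoc]
        simp only [MonoidalCategory.whiskerLeft_comp, Category.assoc]
        rw [leftUnitor_inv_naturality_assoc (f := μ), whisker_exchange_assoc,
          associator_naturality_right_assoc]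
        monoidal
    _ = μ := by rw [zig, Category.comp_id]

theorem isCentralTensor_of_zigzag {ε : A ⟶ 𝟙_ C} {i : 𝟙_ C ⟶ A ⊗ A}
    (zig : (λ_ A).inv ≫ i ▷ A ≫ (α_ A A A).hom ≫ A ◁ (μ ≫ ε) ≫ (ρ_ A).hom = 𝟙 A)
    (zag : (ρ_ A).inv ≫ A ◁ i ≫ (α_ A A A).inv ≫ (μ ≫ ε) ▷ A ≫ (λ_ A).hom = 𝟙 A) :
    IsCentralTensor i := by
  unfold IsCentralTensor
  -- both sides have transpose `μ` under `e_A`, and `zag` makes transposition injective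
  conv_lhs => rw [← transpose_copairing_whiskerLeft_mul zig]
  exact copairing_comp_transpose_whiskerRight zag _

end Casimir

namespace Mod

variable {A : C} [MonObj A]

theorem whiskerLeft_hom_smul {M N : Mod C A} (f : M ⟶ N) :
    A ◁ f.hom ≫ γ[A, N.X] = γ[A, M.X] ≫ f.hom :=
  (IsModHom.smul_hom (A := A) (f := f.hom)).symm

section Cokernel

variable [Abelian C] [PreservesFiniteColimits (tensorLeft A)]

section

variable {M N : Mod C A} (f : M ⟶ N)

noncomputable def cokernelSMul : A ⊗ cokernel f.hom ⟶ cokernel f.hom :=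
  (PreservesCokernel.iso (tensorLeft A) f.hom).hom ≫
    cokernel.desc (A ◁ f.hom) (γ[A, N.X] ≫ cokernel.π f.hom) (by
      rw [← Category.assoc, whiskerLeft_hom_smul, Category.assoc, cokernel.condition, comp_zero])

theorem whiskerLeft_π_cokernelSMul :
    A ◁ cokernel.π f.hom ≫ cokernelSMul f = γ[A, N.X] ≫ cokernel.π f.hom :=
  (PreservesCokernel.π_iso_hom_assoc (tensorLeft A) f.hom _).trans (cokernel.π_desc _ _ _)

noncomputable def cokernel : Mod C A where
  X := Limits.cokernel f.hom
  mod :=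
  { smul := cokernelSMul f
    one_smul := by
      change η ▷ _ ≫ cokernelSMul f = (λ_ _).hom
      have : Epi (𝟙_ C ◁ cokernel.π f.hom) := by rw [id_whiskerLeft]; infer_instance
      rw [← cancel_epi (𝟙_ C ◁ cokernel.π f.hom), whisker_exchange_assoc,
        whiskerLeft_π_cokernelSMul, ModObj.one_smul_self_assoc, leftUnitor_naturality]
    mul_smul := by
      change μ ▷ _ ≫ cokernelSMul f = (α_ _ _ _).hom ≫ A ◁ cokernelSMul f ≫ cokernelSMul f
      have : Epi (A ◁ cokernel.π f.hom) := (tensorLeft A).map_epi _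
      have : Epi (A ◁ A ◁ cokernel.π f.hom) := (tensorLeft A).map_epi _
      have : Epi ((A ⊗ A) ◁ cokernel.π f.hom) := by rw [tensor_whiskerLeft]; infer_instance
      rw [← cancel_epi ((A ⊗ A) ◁ cokernel.π f.hom), whisker_exchange_assoc,
        whiskerLeft_π_cokernelSMul, ModObj.mul_smul_self_assoc, associator_naturality_right_assoc,
        ← MonoidalCategory.whiskerLeft_comp_assoc, whiskerLeft_π_cokernelSMul,
        MonoidalCategory.whiskerLeft_comp_assoc, whiskerLeft_π_cokernelSMul] }

noncomputable def cokernelπ : N ⟶ cokernel f :=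
  Hom.mk' (cokernel.π f.hom) (whiskerLeft_π_cokernelSMul f).symm

end

instance : (forget A : Mod C A ⥤ C).PreservesEpimorphisms where
  preserves {M N} f _ := by
    let zero : N ⟶ cokernel f := Hom.mk' 0 (by
      change γ[A, N.X] ≫ 0 = A ◁ 0 ≫ cokernelSMul f
      have : A ◁ (0 : N.X ⟶ Limits.cokernel f.hom) = 0 := (tensorLeft A).map_zero _ _
      rw [comp_zero, this, zero_comp])
    have : cokernelπ f = zero := (cancel_epi f).1 <|
      hom_ext _ _ ((cokernel.condition f.hom).trans comp_zero.symm)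
    exact Abelian.epi_of_cokernel_π_eq_zero _ (congrArg Hom.hom this)

end Cokernel

instance : (forget A : Mod C A ⥤ C).ReflectsIsomorphisms where
  reflects {M N} f hf := by
    have : IsIso f.hom := hf
    let g : N ⟶ M := Hom.mk' (inv f.hom) (by
      change γ[A, N.X] ≫ inv f.hom = A ◁ inv f.hom ≫ γ[A, M.X]
      rw [← cancel_epi (A ◁ f.hom), ← Category.assoc, whiskerLeft_hom_smul, Category.assoc,
        IsIso.hom_inv_id, Category.comp_id, ← MonoidalCategory.whiskerLeft_comp_assoc,
        IsIso.hom_inv_id, MonoidalCategory.whiskerLeft_id, Category.id_comp])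
    exact ⟨g, by ext; simp [g], by ext; simp [g]⟩

theorem isIso_smul_one_act {K : Type*} [Field K] [Preadditive C] [Linear K C] (M : Mod C A)
    {c : K} (hc : c ≠ 0) : IsIso ((λ_ M.X).inv ≫ (c • η[A]) ▷ M.X ≫ γ[A, M.X]) := by
  have : IsIso (c • 𝟙 (𝟙_ C)) := ⟨c⁻¹ • 𝟙 _, by simp [smul_smul, hc], by simp [smul_smul, hc]⟩
  rw [show c • η[A] = (c • 𝟙 (𝟙_ C)) ≫ η by simp, comp_whiskerRight, Category.assoc,
    ModObj.one_smul_self]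
  infer_instance

section Average

def average (i : 𝟙_ C ⟶ A ⊗ A) {M N : Mod C A} (u : M.X ⟶ N.X) : M.X ⟶ N.X :=
  (λ_ M.X).inv ≫ i ▷ M.X ≫ (α_ A A M.X).hom ≫ A ◁ (γ[A, M.X] ≫ u) ≫ γ[A, N.X]

variable (i : 𝟙_ C ⟶ A ⊗ A)

theorem average_comp_hom {M N P : Mod C A} (u : M.X ⟶ N.X) (g : N ⟶ P) :
    average i u ≫ g.hom = average i (u ≫ g.hom) := by
  simp [average]

theorem average_id (M : Mod C A) :
    average i (𝟙 M.X) = (λ_ M.X).inv ≫ (i ≫ μ) ▷ M.X ≫ γ[A, M.X] := by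
  simp [average]

theorem smul_average (hi : IsCentralTensor i) {M N : Mod C A} (u : M.X ⟶ N.X) :
    γ[A, M.X] ≫ average i u = A ◁ average i u ≫ γ[A, N.X] := by
  calc _ = ((λ_ A).inv ≫ i ▷ A ≫ (α_ A A A).hom ≫ A ◁ μ) ▷ M.X ≫ (α_ A A M.X).hom ≫
        A ◁ (γ[A, M.X] ≫ u) ≫ γ[A, N.X] := by
        simp only [average, comp_whiskerRight, MonoidalCategory.whiskerLeft_comp, Category.assoc]
        rw [leftUnitor_inv_naturality_assoc, whisker_exchange_assoc,
          associator_naturality_right_assoc, associator_naturality_middle_assoc,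
          ← MonoidalCategory.whiskerLeft_comp_assoc (f := μ ▷ M.X), ModObj.mul_smul_self]
        monoidal
    _ = ((ρ_ A).inv ≫ A ◁ i ≫ (α_ A A A).inv ≫ μ ▷ A) ▷ M.X ≫ (α_ A A M.X).hom ≫
        A ◁ (γ[A, M.X] ≫ u) ≫ γ[A, N.X] := by rw [← hi]
    _ = _ := by
        simp only [average, comp_whiskerRight, MonoidalCategory.whiskerLeft_comp, Category.assoc]
        rw [ModObj.mul_smul_self_flip, associator_inv_naturality_right_assoc,
          associator_inv_naturality_right_assoc, whisker_exchange_assoc, whisker_exchange_assoc,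
          associator_naturality_left_assoc]
        monoidal

end Average

theorem isSplitEpi_of_epi_hom {K : Type*} [Field K] [Preadditive C] [Linear K C]
    {i : 𝟙_ C ⟶ A ⊗ A} (hi : IsCentralTensor i) {d : K} (hd : i ≫ μ = d • η) (hd0 : d ≠ 0)
    {M N : Mod C A} (g : M ⟶ N) [Epi g.hom] [Projective N.X] : IsSplitEpi g := by
  let t : N ⟶ M :=
    Hom.mk' (average i (Projective.factorThru (𝟙 N.X) g.hom)) (smul_average i hi _)
  have : IsIso (forget A |>.map (t ≫ g)) := by
    change IsIso (average i _ ≫ g.hom)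
    rw [average_comp_hom, Projective.factorThru_comp, average_id, hd]
    exact isIso_smul_one_act N hd0
  have : IsIso (t ≫ g) := isIso_of_reflects_iso _ (forget A)
  exact IsSplitEpi.mk' ⟨inv (t ≫ g) ≫ t, by simp⟩

end Mod

end CategoryTheory

theorem rigid_algebra_semisimple
    {C : Type u} [Category.{v} C] [MonoidalCategory C] [BraidedCategory C]
    [Abelian C] [CategoryTheory.Linear ℂ C]
    [∀ X : C, PreservesFiniteLimits (tensorLeft X)]
    [∀ X : C, PreservesFiniteLimits (tensorRight X)]
    [∀ X : C, PreservesFiniteColimits (tensorLeft X)]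
    [∀ X : C, PreservesFiniteColimits (tensorRight X)]
    (hproj : ∀ Z : C, Projective Z)
    (A : Mon C) (hcomm : (β_ A.X A.X).hom ≫ MonObj.mul (X := A.X) = MonObj.mul (X := A.X))
    (h1 : Module.finrank ℂ (𝟙_ C ⟶ A.X) = 1)
    (ε : A.X ⟶ 𝟙_ C) (hε : MonObj.one (X := A.X) ≫ ε = 𝟙 (𝟙_ C))
    (iA : 𝟙_ C ⟶ A.X ⊗ A.X)
    (zig : (λ_ A.X).inv ≫ (iA ▷ A.X) ≫ (α_ A.X A.X A.X).hom ≫ (A.X ◁ (MonObj.mul (X := A.X) ≫ ε)) ≫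
        (ρ_ A.X).hom = 𝟙 A.X)
    (zag : (ρ_ A.X).inv ≫ (A.X ◁ iA) ≫ (α_ A.X A.X A.X).inv ≫ ((MonObj.mul (X := A.X) ≫ ε) ▷ A.X) ≫
        (λ_ A.X).hom = 𝟙 A.X)
    (d : ℂ) (hd : iA ≫ MonObj.mul (X := A.X) ≫ ε = d • 𝟙 (𝟙_ C)) (hd0 : d ≠ 0) :
    -- every module over `A` is projective ...
    (∀ X : Mod C A.X, Projective X) ∧
      -- ... hence every epimorphism of `A`-modules splits, i.e. every short exact
      -- sequence in `Mod A` splits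
      (∀ (Y Z : Mod C A.X) (g : Y ⟶ Z), Epi g → ∃ s : Z ⟶ Y, s ≫ g = 𝟙 Z) := by
  have hmul : iA ≫ μ = d • η[A.X] :=
    eq_smul_of_finrank_hom_eq_one h1 hε (by rw [Category.assoc, hd])
  have hsplit (Y Z : Mod C A.X) (g : Y ⟶ Z) [Epi g] : IsSplitEpi g :=
    have := hproj Z.X
    have : Epi g.hom := (Mod.forget A.X).map_epi g
    Mod.isSplitEpi_of_epi_hom (isCentralTensor_of_zigzag zig zag) hmul hd0 g
  refine ⟨fun X => ⟨fun f e _ => ?_⟩, fun Y Z g _ => ?_⟩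
  · have := hsplit _ _ e
    exact ⟨f ≫ section_ e, by simp⟩
  · have := hsplit _ _ g
    exact ⟨section_ g, IsSplitEpi.id g⟩
end

section
/- Let G be a finite group acting by ℂ-algebra automorphisms on a nonzero finite-dimensional commutative associative unital ℂ-algebra A, and suppose the only G-stable ideals of A are 0 and A. Then there exist a subgroup H ≤ G and a G-equivariant isomorphism of ℂ-algebras from A to the algebra of ℂ-valued functions on the coset space G⧸H (with pointwise operations and G acting by left translation). In particular A is reduced and is the algebra of functions on a transitive G-set. -/
/-!
A finite-dimensional nonzero ℂ-algebra has a character `χ : A →ₐ[ℂ] ℂ` (each residue field is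
ℂ). Evaluating at the `G`-orbit of `χ`, which is `G ⧸ stabilizer G χ`, is an equivariant algebra
map `A → (G ⧸ stabilizer G χ → ℂ)`. Its kernel is a proper `G`-stable ideal, hence zero, and it is
surjective by the Chinese remainder theorem: distinct characters have distinct maximal kernels,
which are therefore pairwise coprime.
-/

open Function MulAction

theorem nonempty_algHom_of_isAlgClosed {K A : Type*} [Field K] [IsAlgClosed K] [CommRing A]
    [Nontrivial A] [Algebra K A] [Algebra.IsIntegral K A] : Nonempty (A →ₐ[K] K) := by
  obtain ⟨m, hm⟩ := Ideal.exists_maximal A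
  let := Ideal.Quotient.field m
  exact ⟨((AlgEquiv.ofBijective (Algebra.ofId K (A ⧸ m))
    IsAlgClosed.algebraMap_bijective_of_isIntegral).symm : A ⧸ m →ₐ[K] K).comp
      (Ideal.Quotient.mkₐ K m)⟩

theorem AlgHom.eq_of_ker_eq {R A : Type*} [CommRing R] [Ring A] [Algebra R A]
    {χ ψ : A →ₐ[R] R} (h : RingHom.ker χ = RingHom.ker ψ) : χ = ψ := by
  ext a
  have : a - algebraMap R A (χ a) ∈ RingHom.ker ψ := h ▸ by simp [RingHom.mem_ker]
  exact (sub_eq_zero.mp (by simpa [RingHom.mem_ker] using this)).symm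

section Characters

variable {K A : Type*} [Field K] [CommRing A] [Algebra K A]

theorem AlgHom.ker_isMaximal (χ : A →ₐ[K] K) : (RingHom.ker χ).IsMaximal :=
  RingHom.ker_isMaximal_of_surjective χ fun c => ⟨algebraMap K A c, χ.commutes c⟩

theorem AlgHom.pairwise_isCoprime_ker {ι : Type*} {χ : ι → A →ₐ[K] K} (hχ : Injective χ) :
    Pairwise (IsCoprime on fun i => RingHom.ker (χ i)) := fun i j hij =>
  Ideal.isCoprime_iff_sup_eq.mpr <| (χ i).ker_isMaximal.coprime_of_ne (χ j).ker_isMaximal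
    fun h => hij (hχ (AlgHom.eq_of_ker_eq h))

theorem AlgHom.pi_surjective_of_injective {ι : Type*} [_root_.Finite ι] {χ : ι → A →ₐ[K] K}
    (hχ : Injective χ) : Surjective (AlgHom.pi χ) := by
  intro f
  obtain ⟨a, ha⟩ := Ideal.exists_forall_sub_mem_ideal (AlgHom.pairwise_isCoprime_ker hχ)
    fun i => algebraMap K A (f i)
  exact ⟨a, funext fun i => by simpa [RingHom.mem_ker, sub_eq_zero] using ha i⟩

end Characters

section OrbitEval

variable {G R A B : Type*} [Group G] [CommSemiring R] [Semiring B] [Algebra R B]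

section Semiring

variable [Semiring A] [Algebra R A] [MulSemiringAction G A] [SMulCommClass G R A]

instance AlgHom.instMulActionOfMulSemiringAction : MulAction G (A →ₐ[R] B) where
  smul g χ := χ.comp (MulSemiringAction.toAlgHom R A g⁻¹)
  one_smul χ := AlgHom.ext fun a => show χ ((1 : G)⁻¹ • a) = χ a by rw [inv_one, one_smul]
  mul_smul g h χ := AlgHom.ext fun a =>
    show χ ((g * h)⁻¹ • a) = χ (h⁻¹ • g⁻¹ • a) by rw [mul_inv_rev, mul_smul]

theorem AlgHom.smul_apply (g : G) (χ : A →ₐ[R] B) (a : A) : (g • χ) a = χ (g⁻¹ • a) := rfl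

variable (G) in
noncomputable def orbitEval (χ : A →ₐ[R] B) : A →ₐ[R] (G ⧸ stabilizer G χ → B) :=
  AlgHom.pi fun c => ofQuotientStabilizer G χ c

theorem orbitEval_smul (χ : A →ₐ[R] B) (g : G) (a : A) (c : G ⧸ stabilizer G χ) :
    orbitEval G χ (g • a) c = orbitEval G χ a (g⁻¹ • c) := by
  simp [orbitEval, ofQuotientStabilizer_smul, AlgHom.smul_apply]

end Semiring

theorem orbitEval_injective [Ring A] [Algebra R A] [MulSemiringAction G A] [SMulCommClass G R A]
    [Nontrivial B] (χ : A →ₐ[R] B)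
    (hA : ∀ I : Ideal A, (∀ g : G, ∀ x ∈ I, g • x ∈ I) → I = ⊥ ∨ I = ⊤) :
    Injective (orbitEval G χ) := by
  have hstable : ∀ g : G, ∀ x ∈ RingHom.ker (orbitEval G χ),
      g • x ∈ RingHom.ker (orbitEval G χ) := by
    intro g x hx
    ext c
    rw [orbitEval_smul, RingHom.mem_ker.mp hx]
    rfl
  rcases hA _ hstable with h | h
  · exact (RingHom.injective_iff_ker_eq_bot _).mpr h
  · exact absurd h (RingHom.ker_ne_top _)

theorem orbitEval_surjective {K : Type*} [Finite G] [Field K] [CommRing A] [Algebra K A]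
    [MulSemiringAction G A] [SMulCommClass G K A] (χ : A →ₐ[K] K) :
    Surjective (orbitEval G χ) :=
  AlgHom.pi_surjective_of_injective (injective_ofQuotientStabilizer G χ)

end OrbitEval

theorem simple_G_algebra_is_functions_on_coset_space
    (G : Type*) [Group G] [Finite G]
    (A : Type*) [CommRing A] [Algebra ℂ A] [FiniteDimensional ℂ A] [Nontrivial A]
    (ρ : G →* (A ≃ₐ[ℂ] A))
    (hsimple : ∀ I : Ideal A, (∀ (g : G), ∀ x ∈ I, ρ g x ∈ I) → I = ⊥ ∨ I = ⊤) :
    ∃ (H : Subgroup G) (φ : A ≃ₐ[ℂ] ((G ⧸ H) → ℂ)),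
      ∀ (g : G) (x : A) (c : G ⧸ H), φ (ρ g x) c = φ x (g⁻¹ • c) := by
  -- `g • x` unfolds to `ρ g x`, so `hsimple` and `orbitEval_smul` apply as they stand
  let : MulSemiringAction G A := .compHom A ρ
  have : SMulCommClass G ℂ A := ⟨fun g c a => map_smul (ρ g) c a⟩
  obtain ⟨χ⟩ := nonempty_algHom_of_isAlgClosed (K := ℂ) (A := A)
  exact ⟨stabilizer G χ, .ofBijective (orbitEval G χ)
    ⟨orbitEval_injective χ hsimple, orbitEval_surjective χ⟩, orbitEval_smul χ⟩
end
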